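/- Equal treatment of symmetric teams: let σ be a permutation of the teams such that M_{σ(i)σ(j)} = M_{ij} for all i, j and s_{σ(i)} = s_i for all i. Then the generalized row sum rating satisfies x_{σ(i)}(ε) = x_i(ε) for every team i and every ε > 0. In particular, two teams that achieved the same results against opponents of the same strength receive equal ratings. -/

import Mathlib

/-! Relabelling the teams by `σ` turns the rating `x` into `x ∘ σ`, which solves the same system
`(1 + ε L) y = s`. That system has at most one solution: since `M` is symmetric,
`2 vᵀ L v = ∑ i j, M i j (v i - v j)²`, so `vᵀ (1 + ε L) v ≥ vᵀ v` for `ε ≥ 0`. -/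

open Matrix Finset

/-- The Laplacian matrix of the matches matrix `M`:
`L i j = -M i j` for `i ≠ j` and `L i i = ∑_{j ≠ i} M i j`. -/
def lap {n : ℕ} (M : Matrix (Fin n) (Fin n) ℝ) : Matrix (Fin n) (Fin n) ℝ :=
  Matrix.of fun i j => if i = j then ∑ k ∈ Finset.univ.erase i, M i k else -M i j

section

variable {n : ℕ} {M : Matrix (Fin n) (Fin n) ℝ}

theorem lap_mulVec_apply (M : Matrix (Fin n) (Fin n) ℝ) (v : Fin n → ℝ) (i : Fin n) :
    (lap M *ᵥ v) i = ∑ j, M i j * (v i - v j) := by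
  rw [← Finset.add_sum_erase _ _ (Finset.mem_univ i), sub_self, mul_zero, zero_add,
    mulVec, dotProduct, ← Finset.add_sum_erase _ _ (Finset.mem_univ i)]
  simp only [lap, of_apply, if_pos, mul_sub, Finset.sum_sub_distrib, Finset.sum_mul]
  rw [sub_eq_add_neg, ← Finset.sum_neg_distrib]
  congr 1
  refine Finset.sum_congr rfl fun j hj => ?_
  rw [if_neg (Finset.ne_of_mem_erase hj).symm, neg_mul]

theorem lap_mulVec_comp_perm (σ : Equiv.Perm (Fin n)) (hMσ : ∀ i j, M (σ i) (σ j) = M i j)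
    (v : Fin n → ℝ) : lap M *ᵥ (v ∘ σ) = (lap M *ᵥ v) ∘ σ := by
  funext i
  simp only [lap_mulVec_apply, Function.comp_apply]
  rw [← Equiv.sum_comp σ (fun j => M (σ i) j * (v (σ i) - v j))]
  simp only [hMσ]

theorem two_mul_dotProduct_lap_mulVec (hsymm : M.IsSymm) (v : Fin n → ℝ) :
    2 * (v ⬝ᵥ lap M *ᵥ v) = ∑ i, ∑ j, M i j * (v i - v j) ^ 2 := by
  have hform : v ⬝ᵥ lap M *ᵥ v = ∑ i, ∑ j, M i j * v i * (v i - v j) := by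
    simp only [dotProduct, lap_mulVec_apply, Finset.mul_sum]
    exact Finset.sum_congr rfl fun i _ => Finset.sum_congr rfl fun j _ => by ring
  have hswap : v ⬝ᵥ lap M *ᵥ v = ∑ i, ∑ j, M i j * v j * (v j - v i) := by
    rw [hform, Finset.sum_comm]
    simp only [hsymm.apply]
  rw [two_mul]
  nth_rw 1 [hform]
  rw [hswap, ← Finset.sum_add_distrib]
  refine Finset.sum_congr rfl fun i _ => ?_
  rw [← Finset.sum_add_distrib]
  exact Finset.sum_congr rfl fun j _ => by ring

theorem dotProduct_lap_mulVec_nonneg (hsymm : M.IsSymm) (hnonneg : ∀ i j, 0 ≤ M i j)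
    (v : Fin n → ℝ) : 0 ≤ v ⬝ᵥ lap M *ᵥ v := by
  have hsum : 0 ≤ ∑ i, ∑ j, M i j * (v i - v j) ^ 2 :=
    Finset.sum_nonneg fun i _ => Finset.sum_nonneg fun j _ =>
      mul_nonneg (hnonneg i j) (sq_nonneg _)
  linarith [two_mul_dotProduct_lap_mulVec hsymm v]

theorem one_add_smul_lap_mulVec_injective (hsymm : M.IsSymm) (hnonneg : ∀ i j, 0 ≤ M i j)
    {ε : ℝ} (hε : 0 ≤ ε) : Function.Injective (1 + ε • lap M).mulVec := by
  intro v w hvw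
  set u := v - w
  have hu : (1 + ε • lap M) *ᵥ u = 0 := by rw [mulVec_sub, hvw, sub_self]
  have hquad : u ⬝ᵥ u + ε * (u ⬝ᵥ lap M *ᵥ u) = 0 := by
    rw [← dotProduct_zero u, ← hu, add_mulVec, one_mulVec, dotProduct_add, smul_mulVec,
      dotProduct_smul, smul_eq_mul]
  have hlap := dotProduct_lap_mulVec_nonneg hsymm hnonneg u
  have huu : u ⬝ᵥ u = 0 :=
    le_antisymm (by nlinarith) (Finset.sum_nonneg fun i _ => mul_self_nonneg (u i))
  exact sub_eq_zero.mp (dotProduct_self_eq_zero.mp huu)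

end

theorem grs_equal_treatment_general
    (n : ℕ) (M : Matrix (Fin n) (Fin n) ℝ)
    (hsymm : M.IsSymm) (hnonneg : ∀ i j, 0 ≤ M i j)
    (σ : Equiv.Perm (Fin n))
    (hMσ : ∀ i j, M (σ i) (σ j) = M i j)
    (ε : ℝ) (hε : 0 < ε) (s x : Fin n → ℝ)
    (hsσ : ∀ i, s (σ i) = s i)
    (hx : (1 + ε • lap M) *ᵥ x = s) :
    ∀ i, x (σ i) = x i := by
  have hperm : (1 + ε • lap M) *ᵥ (x ∘ σ) = (1 + ε • lap M) *ᵥ x :=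
    calc (1 + ε • lap M) *ᵥ (x ∘ σ) = ((1 + ε • lap M) *ᵥ x) ∘ σ := by
          simp only [add_mulVec, one_mulVec, smul_mulVec, lap_mulVec_comp_perm σ hMσ]; rfl
      _ = (1 + ε • lap M) *ᵥ x := by rw [hx]; exact funext hsσ
  exact congrFun (one_add_smul_lap_mulVec_injective hsymm hnonneg hε.le hperm)

/-- Equal treatment of symmetric teams: if a permutation `σ` preserves the matches matrix
and the score vector, then it preserves the generalized row sum rating. -/
theorem grs_equal_treatment
    (n : ℕ) (hn : 1 ≤ n) (M : Matrix (Fin n) (Fin n) ℝ)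
    (hsymm : M.IsSymm) (hnonneg : ∀ i j, 0 ≤ M i j) (hdiag : ∀ i, M i i = 0)
    (σ : Equiv.Perm (Fin n))
    (hMσ : ∀ i j, M (σ i) (σ j) = M i j)
    (ε : ℝ) (hε : 0 < ε) (s x : Fin n → ℝ)
    (hsσ : ∀ i, s (σ i) = s i)
    (hx : (1 + ε • lap M) *ᵥ x = s) :
    ∀ i, x (σ i) = x i :=
  grs_equal_treatment_general n M hsymm hnonneg σ hMσ ε hε s x hsσ hx
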